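/- Let κ ∈ {1, −1}. Let V be a complex vector space with a sesquilinear form B : V × V → ℂ (conjugate-linear in the first argument, linear in the second), and let u : V → V be a conjugate linear involution satisfying B(u x, u y) = κ · conj(B(x, y)) for all x, y. For lists η₁, …, η_n and ξ₁, …, ξ_n in V define the pairing P(η; ξ) := 2ⁿ · Σ_{σ ∈ S_n} κ^{|σ|} · Π_{i=1}^{n} B(ξ_i, η_{σ(i)}), where κ^{|σ|} is the sign of σ if κ = −1 and 1 if κ = 1. Then P(u(η_n), …, u(η₁); u(ξ_n), …, u(ξ₁)) = κⁿ · conj(P(η₁, …, η_n; ξ₁, …, ξ_n)). -/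
import Mathlib


/-- `κ^{|σ|}`: the sign of the permutation `σ` if `κ = -1`, and `1` if `κ = 1`. -/
noncomputable def ksgn (κ : ℂ) {n : ℕ} (σ : Equiv.Perm (Fin n)) : ℂ :=
  if κ = -1 then ((Equiv.Perm.sign σ : ℤ) : ℂ) else 1

/-- The Fock space inner product of generating states,
`P(η; ξ) = 2ⁿ Σ_{σ ∈ S_n} κ^{|σ|} Π_i B (ξ_i) (η_{σ(i)})`, transforms under the
conjugation induced by a conjugate linear involution `u` with
`B (u x) (u y) = κ conj (B x y)` as
`P(u η_n, …, u η₁; u ξ_n, …, u ξ₁) = κⁿ conj (P(η₁, …, η_n; ξ₁, …, ξ_n))`. -/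
theorem stmt_14 {V : Type*} [AddCommGroup V] [Module ℂ V]
    (κ : ℂ) (hκ : κ = 1 ∨ κ = -1)
    (B : V →ₛₗ[starRingEnd ℂ] V →ₗ[ℂ] ℂ)
    (u : V →ₛₗ[starRingEnd ℂ] V) (hu2 : ∀ x, u (u x) = x)
    (huB : ∀ x y, B (u x) (u y) = κ * starRingEnd ℂ (B x y))
    (n : ℕ) (η ξ : Fin n → V) :
    2 ^ n * ∑ σ : Equiv.Perm (Fin n), ksgn κ σ *
        ∏ i : Fin n, B (u (ξ i.rev)) (u (η (σ i).rev)) =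
      κ ^ n * starRingEnd ℂ (2 ^ n * ∑ σ : Equiv.Perm (Fin n), ksgn κ σ *
        ∏ i : Fin n, B (ξ i) (η (σ i))) := by
  have hk : ∀ σ : Equiv.Perm (Fin n), starRingEnd ℂ (ksgn κ σ) = ksgn κ σ := by
    intro σ; unfold ksgn; split
    · push_cast; simp
    · rw [map_one]
  have hsgn : ∀ s t : ℤˣ, s * t * s = t := by
    intro s t; rw [mul_comm s t, mul_assoc, Int.units_mul_self, mul_one]
  have hconj : starRingEnd ℂ (2 ^ n * ∑ σ : Equiv.Perm (Fin n), ksgn κ σ *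
        ∏ i : Fin n, B (ξ i) (η (σ i)))
      = 2 ^ n * ∑ σ : Equiv.Perm (Fin n), ksgn κ σ *
        ∏ i : Fin n, starRingEnd ℂ (B (ξ i) (η (σ i))) := by
    rw [map_mul, map_pow, map_sum]
    congr 1
    · rw [map_ofNat]
    · refine Finset.sum_congr rfl fun σ _ => ?_
      rw [map_mul, map_prod, hk]
  rw [hconj]
  have h1 : ∀ σ : Equiv.Perm (Fin n),
      (∏ i : Fin n, B (u (ξ i.rev)) (u (η (σ i).rev)))
        = κ ^ n * ∏ i : Fin n, starRingEnd ℂ (B (ξ i.rev) (η (σ i).rev)) := by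
    intro σ
    simp only [huB]
    rw [Finset.prod_mul_distrib, Finset.prod_const, Finset.card_univ, Fintype.card_fin]
  have key : (∑ σ : Equiv.Perm (Fin n), ksgn κ σ *
        ∏ i : Fin n, starRingEnd ℂ (B (ξ i.rev) (η (σ i).rev)))
      = ∑ σ : Equiv.Perm (Fin n), ksgn κ σ *
        ∏ i : Fin n, starRingEnd ℂ (B (ξ i) (η (σ i))) := by
    refine Fintype.sum_bijective (fun σ => Fin.revPerm * σ * Fin.revPerm)
      ((Equiv.mulRight Fin.revPerm).bijective.comp (Equiv.mulLeft Fin.revPerm).bijective)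
      _ _ (fun σ => ?_)
    congr 1
    · unfold ksgn; split
      · congr 2
        simp only [map_mul, hsgn]
      · rfl
    · refine (Fintype.prod_equiv Fin.revPerm _ _ fun i => ?_).symm
      simp [Equiv.Perm.mul_apply]
  calc 2 ^ n * ∑ σ : Equiv.Perm (Fin n), ksgn κ σ *
        ∏ i : Fin n, B (u (ξ i.rev)) (u (η (σ i).rev))
      = 2 ^ n * ∑ σ : Equiv.Perm (Fin n), κ ^ n * (ksgn κ σ *
        ∏ i : Fin n, starRingEnd ℂ (B (ξ i.rev) (η (σ i).rev))) := by
        congr 1; refine Finset.sum_congr rfl fun σ _ => ?_; rw [h1]; ring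
    _ = κ ^ n * (2 ^ n * ∑ σ : Equiv.Perm (Fin n), ksgn κ σ *
        ∏ i : Fin n, starRingEnd ℂ (B (ξ i.rev) (η (σ i).rev))) := by
        rw [← Finset.mul_sum]; ring
    _ = _ := by rw [key]
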